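/- Suppose ρ is a stationary measure with K := supp ρ minimal, and A ⊂ K satisfies ρ(A)=1, A has non-empty interior relative to K, and every pair of points of A is contractible under φ. Then φ is two-point contractible on all of K. -/

import Mathlib

open MeasureTheory ProbabilityTheory Filter Topology

/-- A (discrete-time) filtered random dynamical system over a memoryless stationary
noise space, on a metric space `X`. -/
structure MRDS (Ω X : Type*) [mΩ : MeasurableSpace Ω] [MetricSpace X]
    [mX : MeasurableSpace X] [BorelSpace X] where
  P : Measure Ω
  hprob : IsProbabilityMeasure P
  F : ℕ → MeasurableSpace Ω
  hle : ∀ t, F t ≤ mΩ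
  hmono : Monotone F
  θ : ℕ → Ω → Ω
  hθ0 : θ 0 = id
  hθadd : ∀ s t, θ (s + t) = θ s ∘ θ t
  hθmeas : ∀ s t, @Measurable Ω Ω (F (s + t)) (F s) (θ t)
  hθpres : ∀ t, MeasurePreserving (θ t) P P
  memless : ∀ s, Indep (F s) ((⨆ t, F t).comap (θ s)) P
  φ : ℕ → Ω → X → X
  hφcont : ∀ t ω, Continuous (φ t ω)
  hφmeas : ∀ t, @Measurable (Ω × X) X ((F t).prod mX) mX (fun p => φ t p.1 p.2)
  hφ0 : ∀ ω, φ 0 ω = id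
  hφcocycle : ∀ s t ω, φ (s + t) ω = φ t (θ s ω) ∘ φ s ω

namespace MRDS

variable {Ω X : Type*} [MeasurableSpace Ω] [MetricSpace X]
  [MeasurableSpace X] [BorelSpace X]

/-- The one-point transition probabilities `φ_x^t`. -/
noncomputable def law (R : MRDS Ω X) (x : X) (t : ℕ) : Measure X :=
  R.P.map (fun ω => R.φ t ω x)

/-- A closed set that is forward-invariant for the one-point transition probabilities. -/
def FwdInv (R : MRDS Ω X) (K : Set X) : Prop :=
  IsClosed K ∧ ∀ x ∈ K, ∀ t, R.law x t K = 1

/-- A minimal set: non-empty, closed, forward-invariant, with no proper non-empty closed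
forward-invariant subsets. -/
def Minimal (R : MRDS Ω X) (K : Set X) : Prop :=
  K.Nonempty ∧ R.FwdInv K ∧ ∀ K' ⊆ K, R.FwdInv K' → K' = K ∨ K' = ∅

/-- `A` contracts under the noise realisation `ω`. -/
def contracts (R : MRDS Ω X) (ω : Ω) (A : Set X) : Prop :=
  Tendsto (fun t => EMetric.diam (R.φ t ω '' A)) atTop (𝓝 0)

/-- `(ω, x)` is an asymptotically stable pair. -/
def stablePair (R : MRDS Ω X) (ω : Ω) (x : X) : Prop :=
  ∃ U ∈ 𝓝 x, R.contracts ω U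

/-- The set of asymptotically stable pairs. -/
def O (R : MRDS Ω X) : Set (Ω × X) := {p | R.stablePair p.1 p.2}

/-- The set of noise realisations under which `U` contracts. -/
def EU (R : MRDS Ω X) (U : Set X) : Set Ω := {ω | R.contracts ω U}

/-- `x` is potentially stable. -/
def potStable (R : MRDS Ω X) (x : X) : Prop := 0 < R.P {ω | R.stablePair ω x}

/-- `x` is almost surely stable. -/
def asStable (R : MRDS Ω X) (x : X) : Prop := R.P {ω | R.stablePair ω x} = 1

/-- `φ` is globally synchronising. -/
def synchronising (R : MRDS Ω X) : Prop :=
  ∀ x y : X,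
    R.P {ω | Tendsto (fun t => dist (R.φ t ω x) (R.φ t ω y)) atTop (𝓝 0)} = 1

/-- `φ` is stably synchronising. -/
def stablySynchronising (R : MRDS Ω X) : Prop :=
  R.synchronising ∧ ∀ x : X, R.asStable x

/-- `ρ` is a stationary measure for the one-point transition probabilities. -/
def stationary (R : MRDS Ω X) (ρ : Measure X) : Prop :=
  ∀ t, ∀ A : Set X, MeasurableSet A → ∫⁻ x, R.law x t A ∂ρ = ρ A

end MRDS

/-!
Fix `ε > 0` and let `N ⊆ K × K` be the set of pairs from which the two-point motion almost surely
never enters the open `ε`-neighbourhood `D` of the diagonal. Lower semicontinuity of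
`x ↦ P(φ_t x ∈ D)` and the Chapman–Kolmogorov equation make `N` closed and forward invariant, so its
first projection is a closed forward-invariant subset of `K`, hence empty or all of `K`.
If `(a, b) ∈ N` and `b ∈ U`, where `U` is open with `∅ ≠ U ∩ K ⊆ A`, then `a ∉ A`; so these
first points form a `ρ`-null set `Z`, and by stationarity `ρ`-almost every point of `K` almost
surely never enters `Z`. But for `(a, b) ∈ N` the point `b` enters `U` with positive probability
by minimality while the pair stays in `N`, so `a` enters `Z` with positive probability. Hence
`N = ∅`.
-/

open scoped ENNReal
open Set

theorem lowerSemicontinuous_lintegral {α β : Type*} [TopologicalSpace α]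
    [FirstCountableTopology α] [MeasurableSpace β] {μ : Measure β} {f : α → β → ℝ≥0∞}
    (hf : ∀ b, LowerSemicontinuous fun a => f a b) (hmeas : ∀ a, Measurable (f a)) :
    LowerSemicontinuous fun a => ∫⁻ b, f a b ∂μ := by
  refine lowerSemicontinuous_iff_le_liminf.2 fun a => ?_
  calc ∫⁻ b, f a b ∂μ ≤ ∫⁻ b, liminf (fun a' => f a' b) (𝓝 a) ∂μ :=
        lintegral_mono fun b => (hf b).le_liminf a
    _ ≤ liminf (fun a' => ∫⁻ b, f a' b ∂μ) (𝓝 a) := lintegral_liminf_le hmeas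

theorem IsClosed.measurableSet_image_fst_inter_preimage_snd {X Y : Type*} [TopologicalSpace X]
    [T2Space X] [MeasurableSpace X] [OpensMeasurableSpace X] [MetricSpace Y]
    [CompactSpace X] [CompactSpace Y] {N : Set (X × Y)} (hN : IsClosed N) {U : Set Y}
    (hU : IsOpen U) : MeasurableSet (Prod.fst '' (N ∩ Prod.snd ⁻¹' U)) := by
  obtain ⟨F, hF, -, rfl, -⟩ := hU.exists_iUnion_isClosed
  simp only [preimage_iUnion, inter_iUnion, image_iUnion]
  exact .iUnion fun n =>
    ((hN.inter ((hF n).preimage continuous_snd)).isCompact.image continuous_fst).measurableSet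

namespace MRDS

section OnePoint

variable {Ω Y : Type*} [mΩ : MeasurableSpace Ω] [MetricSpace Y] [mY : MeasurableSpace Y]
  [BorelSpace Y] (R : MRDS Ω Y)

instance : IsProbabilityMeasure R.P := R.hprob

lemma measurable_φ_apply_F (s : ℕ) (x : Y) : Measurable[R.F s] fun ω => R.φ s ω x :=
  (R.hφmeas s).comp (measurable_id.prodMk measurable_const)

lemma measurable_φ_apply (s : ℕ) (x : Y) : Measurable fun ω => R.φ s ω x :=
  (R.measurable_φ_apply_F s x).mono (R.hle s) le_rfl

lemma measurable_uncurry_φ (s : ℕ) : Measurable fun q : Ω × Y => R.φ s q.1 q.2 :=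
  (R.hφmeas s).mono (sup_le_sup (MeasurableSpace.comap_mono (R.hle s)) le_rfl) le_rfl

instance (x : Y) (t : ℕ) : IsProbabilityMeasure (R.law x t) :=
  Measure.isProbabilityMeasure_map (R.measurable_φ_apply t x).aemeasurable

lemma law_apply (x : Y) (t : ℕ) {S : Set Y} (hS : MeasurableSet S) :
    R.law x t S = R.P ((fun ω => R.φ t ω x) ⁻¹' S) :=
  Measure.map_apply (R.measurable_φ_apply t x) hS

lemma law_apply_eq_one_iff_ae (x : Y) (t : ℕ) {S : Set Y} (hS : MeasurableSet S) :
    R.law x t S = 1 ↔ ∀ᵐ z ∂(R.law x t), z ∈ S := by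
  rw [ae_mem_iff_measure_eq hS.nullMeasurableSet, measure_univ]

lemma law_apply_eq_one_iff (x : Y) (t : ℕ) {S : Set Y} (hS : MeasurableSet S) :
    R.law x t S = 1 ↔ ∀ᵐ ω ∂(R.P), R.φ t ω x ∈ S := by
  rw [R.law_apply_eq_one_iff_ae x t hS, law,
    ae_map_iff (p := (· ∈ S)) (R.measurable_φ_apply t x).aemeasurable hS]

lemma law_zero (x : Y) : R.law x 0 = Measure.dirac x := by
  simp [law, R.hφ0, Measure.map_const]

lemma measurable_law_apply (t : ℕ) {S : Set Y} (hS : MeasurableSet S) :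
    Measurable fun z => R.law z t S := by
  simp_rw [R.law_apply _ t hS]
  exact measurable_measure_prodMk_left
    ((R.measurable_uncurry_φ t).comp measurable_swap hS)

noncomputable abbrev Finfty : MeasurableSpace Ω := ⨆ t, R.F t

lemma Finfty_le : R.Finfty ≤ mΩ := iSup_le R.hle

lemma measurable_θ_Finfty (s : ℕ) : Measurable[mΩ, R.Finfty] (R.θ s) := by
  refine measurable_iff_comap_le.mpr ?_
  rw [Finfty, MeasurableSpace.comap_iSup]
  exact iSup_le fun t => (measurable_iff_comap_le.mp (R.hθmeas t s)).trans (R.hle (t + s))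

/-- Memorylessness: `θ s` is independent of `𝓕_s` and, by stationarity of the noise, distributed
as `P` on `𝓕_∞`. -/
lemma lintegral_comp_θ (s : ℕ) {V : Ω → Y} (hV : Measurable[R.F s] V) {g : Y × Ω → ℝ≥0∞}
    (hg : Measurable[mY.prod R.Finfty] g) :
    ∫⁻ ω, g (V ω, R.θ s ω) ∂(R.P) = ∫⁻ ω, ∫⁻ ω', g (V ω, ω') ∂(R.P) ∂(R.P) := by
  have hVm : Measurable V := hV.mono (R.hle s) le_rfl
  have hθ := R.measurable_θ_Finfty s
  have hθa := @Measurable.aemeasurable Ω Ω mΩ R.Finfty (R.θ s) R.P hθ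
  have hgz (z : Y) : Measurable[R.Finfty] fun ω' => g (z, ω') :=
    hg.comp (measurable_const.prodMk measurable_id)
  let Q : @Measure Ω R.Finfty := @Measure.map Ω Ω mΩ R.Finfty (R.θ s) R.P
  have : IsProbabilityMeasure Q :=
    @Measure.isProbabilityMeasure_map Ω Ω mΩ R.Finfty R.P _ _ hθa
  have hQ (z : Y) : ∫⁻ ω', g (z, ω') ∂Q = ∫⁻ ω', g (z, ω') ∂(R.P) := by
    rw [@lintegral_map Ω Ω mΩ R.Finfty R.P _ (R.θ s) (hgz z) hθ]
    exact (R.hθpres s).lintegral_comp ((hgz z).mono R.Finfty_le le_rfl)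
  have hindep : @IndepFun Ω Y Ω mΩ mY R.Finfty V (R.θ s) R.P := by
    refine (@indepFun_iff_measure_inter_preimage_eq_mul Ω Y Ω mΩ R.P V (R.θ s) mY
      R.Finfty).mpr fun S T hS hT => ?_
    exact ((R.memless s).indepSet_of_measurableSet (hV hS)
      ⟨T, hT, rfl⟩).measure_inter_eq_mul
  have hmap : @Measure.map Ω (Y × Ω) mΩ (mY.prod R.Finfty) (fun ω => (V ω, R.θ s ω)) R.P =
      @Measure.prod Y Ω mY R.Finfty (R.P.map V) Q :=
    (indepFun_iff_map_prod_eq_prod_map_map (mβ := mY) (mβ' := R.Finfty)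
      hVm.aemeasurable hθa).mp hindep
  calc ∫⁻ ω, g (V ω, R.θ s ω) ∂(R.P)
      = ∫⁻ p, g p ∂(@Measure.map Ω (Y × Ω) mΩ (mY.prod R.Finfty)
          (fun ω => (V ω, R.θ s ω)) R.P) :=
        (@lintegral_map Ω (Y × Ω) mΩ (mY.prod R.Finfty) R.P g _ hg (hVm.prodMk hθ)).symm
    _ = ∫⁻ z, ∫⁻ ω', g (z, ω') ∂Q ∂(R.P.map V) := by
        rw [hmap]
        exact @lintegral_prod Y Ω mY R.Finfty (R.P.map V) Q _ g hg.aemeasurable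
    _ = ∫⁻ z, ∫⁻ ω', g (z, ω') ∂(R.P) ∂(R.P.map V) := by simp_rw [hQ]
    _ = ∫⁻ ω, ∫⁻ ω', g (V ω, ω') ∂(R.P) ∂(R.P) :=
        lintegral_map ((hg.mono (sup_le_sup le_rfl (MeasurableSpace.comap_mono R.Finfty_le))
          le_rfl).lintegral_prod_right') hVm

lemma law_apply_eq_lintegral (x : Y) (t : ℕ) {D : Set Y} (hD : MeasurableSet D) :
    R.law x t D = ∫⁻ ω, D.indicator 1 (R.φ t ω x) ∂(R.P) := by
  rw [← lintegral_indicator_one hD, law,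
    lintegral_map (measurable_one.indicator hD) (R.measurable_φ_apply t x)]

lemma law_add_apply (x : Y) (s t : ℕ) {D : Set Y} (hD : MeasurableSet D) :
    R.law x (s + t) D = ∫⁻ z, R.law z t D ∂(R.law x s) := by
  have hswap : Measurable[mY.prod R.Finfty, (R.F t).prod mY] fun q : Y × Ω => (q.2, q.1) :=
    (measurable_snd.mono le_rfl (le_iSup R.F t)).prodMk measurable_fst
  have hg : Measurable[mY.prod R.Finfty]
      fun q : Y × Ω => D.indicator (1 : Y → ℝ≥0∞) (R.φ t q.2 q.1) :=
    (measurable_one.indicator hD).comp ((R.hφmeas t).comp hswap)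
  calc R.law x (s + t) D
      = ∫⁻ ω, D.indicator 1 (R.φ t (R.θ s ω) (R.φ s ω x)) ∂(R.P) := by
        simp only [R.law_apply_eq_lintegral _ _ hD, R.hφcocycle, Function.comp_apply]
    _ = ∫⁻ ω, ∫⁻ ω', D.indicator 1 (R.φ t ω' (R.φ s ω x)) ∂(R.P) ∂(R.P) :=
        R.lintegral_comp_θ s (R.measurable_φ_apply_F s x) hg
    _ = ∫⁻ z, R.law z t D ∂(R.law x s) := by
        simp only [R.law_apply_eq_lintegral _ _ hD]
        rw [law, lintegral_map _ (R.measurable_φ_apply s x)]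
        simp_rw [← R.law_apply_eq_lintegral _ _ hD]
        exact R.measurable_law_apply t hD

lemma lowerSemicontinuous_law_apply (t : ℕ) {D : Set Y} (hD : IsOpen D) :
    LowerSemicontinuous fun x => R.law x t D := by
  simp_rw [R.law_apply_eq_lintegral _ t hD.measurableSet]
  exact lowerSemicontinuous_lintegral
    (fun ω => (hD.lowerSemicontinuous_indicator zero_le_one).comp (R.hφcont t ω))
    fun x => (measurable_one.indicator hD.measurableSet).comp (R.measurable_φ_apply t x)

def neverHits (D : Set Y) : Set Y := {x | ∀ t, R.law x t D = 0}

variable {R}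

lemma mem_neverHits_iff {D : Set Y} (hD : MeasurableSet D) {x : Y} :
    x ∈ R.neverHits D ↔ R.P {ω | ∃ t, R.φ t ω x ∈ D} = 0 := by
  simp only [neverHits, mem_ofPred_eq, R.law_apply _ _ hD, ofPred_exists,
    measure_iUnion_null_iff]
  rfl

lemma isClosed_neverHits {D : Set Y} (hD : IsOpen D) : IsClosed (R.neverHits D) := by
  simp only [neverHits, ofPred_forall]
  refine isClosed_iInter fun t => ?_
  simpa only [preimage, mem_Iic, nonpos_iff_eq_zero] using
    (R.lowerSemicontinuous_law_apply t hD).isClosed_preimage 0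

lemma ae_mem_neverHits {D : Set Y} (hD : MeasurableSet D) {x : Y} (hx : x ∈ R.neverHits D)
    (s : ℕ) : ∀ᵐ z ∂(R.law x s), z ∈ R.neverHits D := by
  refine ae_all_iff.2 fun t => (lintegral_eq_zero_iff (R.measurable_law_apply t hD)).1 ?_
  rw [← R.law_add_apply x s t hD]
  exact hx (s + t)

lemma FwdInv.inter_neverHits {K : Set Y} (hK : R.FwdInv K) {D : Set Y} (hD : IsOpen D) :
    R.FwdInv (R.neverHits D ∩ K) := by
  have hcl := (isClosed_neverHits (R := R) hD).inter hK.1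
  refine ⟨hcl, fun x hx t => ?_⟩
  have hKt := (R.law_apply_eq_one_iff_ae x t hK.1.measurableSet).1 (hK.2 x hx.2 t)
  refine (R.law_apply_eq_one_iff_ae x t hcl.measurableSet).2 ?_
  filter_upwards [ae_mem_neverHits hD.measurableSet hx.1 t, hKt] with z hz hzK using ⟨hz, hzK⟩

lemma Minimal.exists_law_ne_zero {K : Set Y} (hmin : R.Minimal K) {D : Set Y} (hD : IsOpen D)
    (hDK : (D ∩ K).Nonempty) {x : Y} (hx : x ∈ K) : ∃ t, R.law x t D ≠ 0 := by
  by_contra! h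
  rcases hmin.2.2 _ inter_subset_right (hmin.2.1.inter_neverHits hD) with hK | hK
  · obtain ⟨z, hzD, hzK⟩ := hDK
    have := (hK.symm ▸ hzK : z ∈ R.neverHits D ∩ K).1 0
    simp [R.law_zero, hzD] at this
  · exact (hK ▸ ⟨h, hx⟩ : x ∈ (∅ : Set Y))

lemma stationary.ae_law_eq_zero {ρ : Measure Y} (hρ : R.stationary ρ) {Z : Set Y}
    (hZ : MeasurableSet Z) (hρZ : ρ Z = 0) : ∀ᵐ x ∂ρ, ∀ t, R.law x t Z = 0 :=
  ae_all_iff.2 fun t => (lintegral_eq_zero_iff (R.measurable_law_apply t hZ)).1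
    ((hρ t Z hZ).trans hρZ)

end OnePoint

section TwoPoint

variable {Ω X : Type*} [MeasurableSpace Ω] [MetricSpace X] [MeasurableSpace X] [BorelSpace X]
  [SecondCountableTopology X]

noncomputable def pair (R : MRDS Ω X) : MRDS Ω (X × X) where
  P := R.P
  hprob := R.hprob
  F := R.F
  hle := R.hle
  hmono := R.hmono
  θ := R.θ
  hθ0 := R.hθ0
  hθadd := R.hθadd
  hθmeas := R.hθmeas
  hθpres := R.hθpres
  memless := R.memless
  φ t ω p := (R.φ t ω p.1, R.φ t ω p.2)
  hφcont t ω := ((R.hφcont t ω).comp continuous_fst).prodMk ((R.hφcont t ω).comp continuous_snd)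
  hφmeas t :=
    ((R.hφmeas t).comp (measurable_fst.prodMk (measurable_fst.comp measurable_snd))).prodMk
      ((R.hφmeas t).comp (measurable_fst.prodMk (measurable_snd.comp measurable_snd)))
  hφ0 ω := by funext p; simp [R.hφ0]
  hφcocycle s t ω := by funext p; simp [R.hφcocycle]

@[simp] lemma pair_φ (R : MRDS Ω X) (t : ℕ) (ω : Ω) (p : X × X) :
    R.pair.φ t ω p = (R.φ t ω p.1, R.φ t ω p.2) := rfl

variable {R : MRDS Ω X}

lemma mk_notMem_pair_neverHits_iff {x y : X} {ε : ℝ} :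
    (x, y) ∉ R.pair.neverHits {q | dist q.1 q.2 < ε} ↔
      0 < R.P {ω | ∃ t, dist (R.φ t ω x) (R.φ t ω y) < ε} := by
  rw [mem_neverHits_iff (isOpen_lt continuous_dist continuous_const).measurableSet,
    pos_iff_ne_zero]
  rfl

lemma FwdInv.pair_prod {K L : Set X} (hK : R.FwdInv K) (hL : R.FwdInv L) :
    R.pair.FwdInv (K ×ˢ L) := by
  refine ⟨hK.1.prod hL.1, fun p hp t => ?_⟩
  rw [R.pair.law_apply_eq_one_iff p t (hK.1.prod hL.1).measurableSet]
  filter_upwards [(R.law_apply_eq_one_iff _ t hK.1.measurableSet).1 (hK.2 _ hp.1 t),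
    (R.law_apply_eq_one_iff _ t hL.1.measurableSet).1 (hL.2 _ hp.2 t)] with ω h1 h2
  exact ⟨h1, h2⟩

lemma FwdInv.image_fst [CompactSpace X] {H : Set (X × X)} (hH : R.pair.FwdInv H) :
    R.FwdInv (Prod.fst '' H) := by
  have hcl : IsClosed (Prod.fst '' H) := (hH.1.isCompact.image continuous_fst).isClosed
  refine ⟨hcl, ?_⟩
  rintro _ ⟨p, hp, rfl⟩ t
  rw [R.law_apply_eq_one_iff _ t hcl.measurableSet]
  filter_upwards [(R.pair.law_apply_eq_one_iff p t hH.1.measurableSet).1 (hH.2 p hp t)]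
    with ω hω
  exact ⟨_, hω, rfl⟩

theorem Minimal.eq_empty_of_pair_fwdInv [CompactSpace X] {ρ : Measure X}
    (hstat : R.stationary ρ) {K : Set X} (hmin : R.Minimal K) (hρK : ρ K ≠ 0) {U : Set X}
    (hU : IsOpen U) (hUK : (U ∩ K).Nonempty) {N : Set (X × X)} (hN : R.pair.FwdInv N)
    (hNK : N ⊆ K ×ˢ K) (hρZ : ρ (Prod.fst '' (N ∩ Prod.snd ⁻¹' U)) = 0) : N = ∅ := by
  set Z := Prod.fst '' (N ∩ Prod.snd ⁻¹' U)
  have hZ : MeasurableSet Z := hN.1.measurableSet_image_fst_inter_preimage_snd hU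
  obtain ⟨a, haK, ha⟩ := Measure.exists_mem_of_measure_ne_zero_of_ae hρK
    (ae_restrict_of_ae (hstat.ae_law_eq_zero hZ hρZ))
  by_contra hne
  have hfst : Prod.fst '' N = K := by
    refine (hmin.2.2 _ ?_ hN.image_fst).resolve_right (image_eq_empty.not.2 hne)
    rintro _ ⟨p, hp, rfl⟩
    exact (hNK hp).1
  obtain ⟨p, hp, rfl⟩ : a ∈ Prod.fst '' N := hfst ▸ haK
  obtain ⟨t, ht⟩ := hmin.exists_law_ne_zero hU hUK (hNK hp).2
  refine ht ?_
  rw [R.law_apply _ _ hU.measurableSet]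
  refine measure_mono_null_ae ?_ (by rw [← R.law_apply _ _ hZ]; exact ha t)
  filter_upwards [(R.pair.law_apply_eq_one_iff p t hN.1.measurableSet).1 (hN.2 p hp t)]
    with ω hω hωU
  exact ⟨_, ⟨hω, hωU⟩, rfl⟩

end TwoPoint

end MRDS

theorem stmt13_general {Ω X : Type*} [MeasurableSpace Ω] [MetricSpace X] [CompactSpace X]
    [MeasurableSpace X] [BorelSpace X] (R : MRDS Ω X)
    (ρ : Measure X) (hρ : IsProbabilityMeasure ρ) (hstat : R.stationary ρ)
    (K : Set X)
    (hmin : R.Minimal K)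
    (A : Set X) (hAK : A ⊆ K) (hAfull : ρ A = 1)
    (hAint : ∃ U : Set X, IsOpen U ∧ (U ∩ K).Nonempty ∧ U ∩ K ⊆ A)
    (hAcontr : ∀ x ∈ A, ∀ y ∈ A, ∀ ε > (0 : ℝ),
      0 < R.P {ω | ∃ t, dist (R.φ t ω x) (R.φ t ω y) < ε}) :
    ∀ x ∈ K, ∀ y ∈ K, ∀ ε > (0 : ℝ),
      0 < R.P {ω | ∃ t, dist (R.φ t ω x) (R.φ t ω y) < ε} := by
  intro x hx y hy ε hε
  obtain ⟨U, hU, hUK, hUA⟩ := hAint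
  set D : Set (X × X) := {q | dist q.1 q.2 < ε}
  set N := R.pair.neverHits D ∩ K ×ˢ K
  have hN : R.pair.FwdInv N :=
    (hmin.2.1.pair_prod hmin.2.1).inter_neverHits (isOpen_lt continuous_dist continuous_const)
  have hZA : Prod.fst '' (N ∩ Prod.snd ⁻¹' U) ⊆ Aᶜ := by
    rintro _ ⟨p, ⟨⟨hpD, -, hpK⟩, hpU⟩, rfl⟩ hpA
    exact MRDS.mk_notMem_pair_neverHits_iff.2 (hAcontr p.1 hpA p.2 (hUA ⟨hpU, hpK⟩) ε hε) hpD
  have hρZ : ρ (Prod.fst '' (N ∩ Prod.snd ⁻¹' U)) = 0 := by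
    have hZ := hN.1.measurableSet_image_fst_inter_preimage_snd hU
    refine (prob_compl_eq_one_iff hZ).1 (le_antisymm prob_le_one ?_)
    exact hAfull ▸ measure_mono fun a ha haZ => hZA haZ ha
  have hρK : ρ K ≠ 0 := ne_bot_of_le_ne_bot (hAfull ▸ one_ne_zero) (measure_mono hAK)
  have hNe := hmin.eq_empty_of_pair_fwdInv hstat hρK hU hUK hN inter_subset_right hρZ
  exact MRDS.mk_notMem_pair_neverHits_iff.1 fun hxy => hNe.subset ⟨hxy, hx, hy⟩

/-- If `ρ` is a stationary measure whose support `K` is minimal, and `A ⊆ K` has full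
`ρ`-measure, non-empty interior relative to `K`, and all pairs of points of `A`
contractible, then `φ` is two-point contractible on all of `K`. -/
theorem stmt13 {Ω X : Type*} [MeasurableSpace Ω] [MetricSpace X] [CompactSpace X]
    [MeasurableSpace X] [BorelSpace X] (R : MRDS Ω X)
    (ρ : Measure X) (hρ : IsProbabilityMeasure ρ) (hstat : R.stationary ρ)
    (K : Set X) (hsupp : K = {x : X | ∀ U : Set X, IsOpen U → x ∈ U → 0 < ρ U})
    (hmin : R.Minimal K)
    (A : Set X) (hAK : A ⊆ K) (hAfull : ρ A = 1)
    (hAint : ∃ U : Set X, IsOpen U ∧ (U ∩ K).Nonempty ∧ U ∩ K ⊆ A)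
    (hAcontr : ∀ x ∈ A, ∀ y ∈ A, ∀ ε > (0 : ℝ),
      0 < R.P {ω | ∃ t, dist (R.φ t ω x) (R.φ t ω y) < ε}) :
    ∀ x ∈ K, ∀ y ∈ K, ∀ ε > (0 : ℝ),
      0 < R.P {ω | ∃ t, dist (R.φ t ω x) (R.φ t ω y) < ε} :=
  stmt13_general R ρ hρ hstat K hmin A hAK hAfull hAint hAcontr
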